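/- Let (V, P, g) be 4-dimensional with tr P = 0, and let L be a Riemannian P-tensor on V. Then the almost Einstein condition ρ(L)(y, z) = (1/4){τ(L) g(y, z) + τ*(L) g(y, Pz)} holds for all y, z ∈ V. -/

import Mathlib

/-!
Since `P` is a symmetric involution with trace zero, `V` is the orthogonal sum of two
`2`-dimensional eigenspaces `V₊`, `V₋` of `P`. Invariance of `L` under `P` in its last pair (and,
by pair symmetry, in its first pair) kills every component of `L` in which a pair mixes `V₊` and
`V₋`. In an orthonormal basis `e₀, e₁ ∈ V₊`, `e₂, e₃ ∈ V₋` the only surviving sectional curvatures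
are `a = L(e₀,e₁,e₁,e₀)` and `d = L(e₂,e₃,e₃,e₂)`, so `ρ = a` on `V₊`, `ρ = d` on `V₋`,
`τ = 2(a + d)` and `τ* = 2(a - d)`, which is the almost Einstein identity.
-/

open scoped RealInnerProductSpace
open Module

variable {V : Type*} [NormedAddCommGroup V] [InnerProductSpace ℝ V]
  [FiniteDimensional ℝ V]

/-- The Ricci tensor ρ(L)(y,z) = Σᵢ L(eᵢ, y, z, eᵢ) of a (0,4)-tensor L,
computed in an orthonormal basis. -/
noncomputable def ricci (L : V →ₗ[ℝ] V →ₗ[ℝ] V →ₗ[ℝ] V →ₗ[ℝ] ℝ) (y z : V) : ℝ :=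
  ∑ i, L (stdOrthonormalBasis ℝ V i) y z (stdOrthonormalBasis ℝ V i)

/-- The scalar curvature τ(L) = Σⱼ ρ(L)(eⱼ, eⱼ). -/
noncomputable def scalarCurv (L : V →ₗ[ℝ] V →ₗ[ℝ] V →ₗ[ℝ] V →ₗ[ℝ] ℝ) : ℝ :=
  ∑ j, ricci L (stdOrthonormalBasis ℝ V j) (stdOrthonormalBasis ℝ V j)

/-- The associated Ricci tensor ρ*(L)(y,z) = Σᵢ L(eᵢ, y, z, Peᵢ). -/
noncomputable def ricciStar (P : V →ₗ[ℝ] V)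
    (L : V →ₗ[ℝ] V →ₗ[ℝ] V →ₗ[ℝ] V →ₗ[ℝ] ℝ) (y z : V) : ℝ :=
  ∑ i, L (stdOrthonormalBasis ℝ V i) y z (P (stdOrthonormalBasis ℝ V i))

/-- The associated scalar curvature τ*(L) = Σⱼ ρ*(L)(eⱼ, eⱼ). -/
noncomputable def scalarCurvStar (P : V →ₗ[ℝ] V)
    (L : V →ₗ[ℝ] V →ₗ[ℝ] V →ₗ[ℝ] V →ₗ[ℝ] ℝ) : ℝ :=
  ∑ j, ricciStar P L (stdOrthonormalBasis ℝ V j) (stdOrthonormalBasis ℝ V j)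

section Contraction

variable {E : Type*} [NormedAddCommGroup E] [InnerProductSpace ℝ E]
  {ι κ : Type*} [Fintype ι] [Fintype κ]

theorem OrthonormalBasis.sum_apply_self_eq (b : OrthonormalBasis ι ℝ E)
    (B : E →ₗ[ℝ] E →ₗ[ℝ] ℝ) (c : OrthonormalBasis κ ℝ E) :
    ∑ i, B (b i) (b i) = ∑ j, B (c j) (c j) :=
  calc ∑ i, B (b i) (b i) = ∑ i, B (∑ j, ⟪c j, b i⟫ • c j) (b i) := by simp only [c.sum_repr']
    _ = ∑ j, B (c j) (∑ i, ⟪b i, c j⟫ • b i) := by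
        simp only [map_sum, map_smul, LinearMap.sum_apply, LinearMap.smul_apply, smul_eq_mul,
          real_inner_comm (b _)]
        exact Finset.sum_comm
    _ = ∑ j, B (c j) (c j) := by simp only [b.sum_repr']

variable (L : E →ₗ[ℝ] E →ₗ[ℝ] E →ₗ[ℝ] E →ₗ[ℝ] ℝ) (M : E →ₗ[ℝ] E)

theorem OrthonormalBasis.sum_contract_eq (b : OrthonormalBasis ι ℝ E)
    (c : OrthonormalBasis κ ℝ E) (y z : E) :
    ∑ i, L (b i) y z (M (b i)) = ∑ j, L (c j) y z (M (c j)) :=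
  b.sum_apply_self_eq (((L.flip y).flip z).compl₂ M) c

theorem OrthonormalBasis.sum_sum_contract_eq (b : OrthonormalBasis ι ℝ E)
    (c : OrthonormalBasis κ ℝ E) :
    ∑ j, ∑ i, L (b i) (b j) (b j) (M (b i)) = ∑ j, ∑ i, L (c i) (c j) (c j) (M (c i)) := by
  simp_rw [b.sum_contract_eq L M c]
  rw [Finset.sum_comm]
  conv_rhs => rw [Finset.sum_comm]
  exact Finset.sum_congr rfl fun i _ =>
    b.sum_apply_self_eq ((L (c i)).compr₂ (LinearMap.applyₗ (M (c i)))) c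

end Contraction

section Curvature

variable {ι : Type*} [Fintype ι] (L : V →ₗ[ℝ] V →ₗ[ℝ] V →ₗ[ℝ] V →ₗ[ℝ] ℝ)
  (b : OrthonormalBasis ι ℝ V)

theorem ricci_eq_sum (y z : V) : ricci L y z = ∑ i, L (b i) y z (b i) :=
  (stdOrthonormalBasis ℝ V).sum_contract_eq L LinearMap.id b y z

theorem scalarCurv_eq_sum : scalarCurv L = ∑ j, ∑ i, L (b i) (b j) (b j) (b i) :=
  (stdOrthonormalBasis ℝ V).sum_sum_contract_eq L LinearMap.id b

theorem scalarCurvStar_eq_sum (P : V →ₗ[ℝ] V) :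
    scalarCurvStar P L = ∑ j, ∑ i, L (b i) (b j) (b j) (P (b i)) :=
  (stdOrthonormalBasis ℝ V).sum_sum_contract_eq L P b

end Curvature

structure IsCurvatureLike {E : Type*} [AddCommGroup E] [Module ℝ E]
    (L : E →ₗ[ℝ] E →ₗ[ℝ] E →ₗ[ℝ] E →ₗ[ℝ] ℝ) : Prop where
  antisymm_left : ∀ x y z w, L x y z w = - L y x z w
  antisymm_right : ∀ x y z w, L x y z w = - L x y w z
  bianchi : ∀ x y z w, L x y z w + L y z x w + L z x y w = 0

namespace IsCurvatureLike

variable {E : Type*} [AddCommGroup E] [Module ℝ E] {L : E →ₗ[ℝ] E →ₗ[ℝ] E →ₗ[ℝ] E →ₗ[ℝ] ℝ}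

theorem apply_self_left (hL : IsCurvatureLike L) (x z w : E) : L x x z w = 0 := by
  linarith [hL.antisymm_left x x z w]

theorem apply_self_right (hL : IsCurvatureLike L) (x y z : E) : L x y z z = 0 := by
  linarith [hL.antisymm_right x y z z]

theorem pair_symm (hL : IsCurvatureLike L) (x y z w : E) : L x y z w = L z w x y := by
  linarith [hL.bianchi x y z w, hL.bianchi y z w x, hL.bianchi z w x y, hL.bianchi w x y z,
    hL.antisymm_left z x y w, hL.antisymm_right y z x w, hL.antisymm_right z w x y,
    hL.antisymm_left w y z x, hL.antisymm_right y w x z, hL.antisymm_right y w z x,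
    hL.antisymm_left w x z y, hL.antisymm_right x w y z, hL.antisymm_right x z w y,
    hL.antisymm_left w x y z, hL.antisymm_right x y w z, hL.antisymm_right x w z y]

theorem apply_eq_zero_of_eigen (hL : IsCurvatureLike L) {P : E →ₗ[ℝ] E}
    (hRP : ∀ x y z w, L x y (P z) (P w) = L x y z w) {z w : E} (hz : P z = z) (hw : P w = -w)
    (x y : E) : L x y z w = 0 ∧ L x y w z = 0 ∧ L z w x y = 0 ∧ L w z x y = 0 := by
  have h : L x y z w = 0 := by
    have := hRP x y z w
    rw [hz, hw, map_neg] at this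
    linarith
  refine ⟨h, ?_, ?_, ?_⟩
  · rw [hL.antisymm_right, h, neg_zero]
  · rw [hL.pair_symm, h]
  · rw [hL.antisymm_left, hL.pair_symm, h, neg_zero]

end IsCurvatureLike

theorem LinearMap.isSymmetric_of_involutive_of_isometry {E : Type*} [NormedAddCommGroup E]
    [InnerProductSpace ℝ E] {P : E →ₗ[ℝ] E} (hP2 : ∀ x, P (P x) = x)
    (hPg : ∀ x y, ⟪P x, P y⟫ = ⟪x, y⟫) : P.IsSymmetric := fun x y => by
  rw [← hPg x (P y), hP2]

theorem eq_of_antitone_of_sign_of_sum_eq_zero {μ : Fin 4 → ℝ} (hμ : Antitone μ)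
    (hsign : ∀ i, μ i = 1 ∨ μ i = -1) (hsum : ∑ i, μ i = 0) : μ = ![1, 1, -1, -1] := by
  have h01 := hμ (show (0 : Fin 4) ≤ 1 by decide)
  have h12 := hμ (show (1 : Fin 4) ≤ 2 by decide)
  have h23 := hμ (show (2 : Fin 4) ≤ 3 by decide)
  rw [Fin.sum_univ_four] at hsum
  rcases hsign 0 with h0 | h0 <;> rcases hsign 1 with h1 | h1 <;>
    rcases hsign 2 with h2 | h2 <;> rcases hsign 3 with h3 | h3 <;>
    first
    | (exfalso; linarith)
    | (ext i; fin_cases i <;> simp [h0, h1, h2, h3])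

theorem exists_orthonormalBasis_adapted (hdim : finrank ℝ V = 4) (P : V →ₗ[ℝ] V)
    (hP2 : ∀ x, P (P x) = x) (hPg : ∀ x y, ⟪P x, P y⟫ = ⟪x, y⟫)
    (htr : LinearMap.trace ℝ V P = 0) :
    ∃ b : OrthonormalBasis (Fin 4) ℝ V,
      P (b 0) = b 0 ∧ P (b 1) = b 1 ∧ P (b 2) = -b 2 ∧ P (b 3) = -b 3 := by
  have hP := LinearMap.isSymmetric_of_involutive_of_isometry hP2 hPg
  set μ := hP.eigenvalues hdim
  set b := hP.eigenvectorBasis hdim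
  have hb (i : Fin 4) : P (b i) = μ i • b i := by
    exact_mod_cast hP.apply_eigenvectorBasis hdim i
  have hsign (i : Fin 4) : μ i = 1 ∨ μ i = -1 := by
    have h : (μ i * μ i) • b i = (1 : ℝ) • b i := by
      rw [one_smul, ← smul_smul, ← hb, ← map_smul, ← hb, hP2]
    exact mul_self_eq_one_iff.mp (smul_left_injective ℝ (b.toBasis.ne_zero i) h)
  have hμ : μ = ![1, 1, -1, -1] :=
    eq_of_antitone_of_sign_of_sum_eq_zero (hP.eigenvalues_antitone hdim) hsign
      (by exact_mod_cast htr ▸ (hP.trace_eq_sum_eigenvalues hdim).symm)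
  refine ⟨b, ?_, ?_, ?_, ?_⟩ <;> simp [hb, hμ]

theorem almost_einstein_of_adapted_basis {E : Type*} [NormedAddCommGroup E]
    [InnerProductSpace ℝ E] {L : E →ₗ[ℝ] E →ₗ[ℝ] E →ₗ[ℝ] E →ₗ[ℝ] ℝ} {P : E →ₗ[ℝ] E}
    (hL : IsCurvatureLike L) (hRP : ∀ x y z w, L x y (P z) (P w) = L x y z w)
    (b : OrthonormalBasis (Fin 4) ℝ E)
    (hb0 : P (b 0) = b 0) (hb1 : P (b 1) = b 1) (hb2 : P (b 2) = -b 2) (hb3 : P (b 3) = -b 3)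
    (y z : E) :
    ∑ i, L (b i) y z (b i) = 1 / 4 * ((∑ j, ∑ i, L (b i) (b j) (b j) (b i)) * ⟪y, z⟫ +
      (∑ j, ∑ i, L (b i) (b j) (b j) (P (b i))) * ⟪y, P z⟫) := by
  have hmix {u v : E} (hu : P u = u) (hv : P v = -v) := hL.apply_eq_zero_of_eigen hRP hu hv
  set a := L (b 0) (b 1) (b 1) (b 0)
  set d := L (b 2) (b 3) (b 3) (b 2)
  have ha : L (b 1) (b 0) (b 0) (b 1) = a := by rw [hL.pair_symm]
  have hd : L (b 3) (b 2) (b 2) (b 3) = d := by rw [hL.pair_symm]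
  have hτ : ∑ j, ∑ i, L (b i) (b j) (b j) (b i) = 2 * (a + d) := by
    simp only [Fin.sum_univ_four, Fin.isValue, hb0, hb1, hb2, hb3, hL.apply_self_left, hmix, ha,
      hd, zero_add, add_zero]
    ring
  have hτ' : ∑ j, ∑ i, L (b i) (b j) (b j) (P (b i)) = 2 * (a - d) := by
    simp only [Fin.sum_univ_four, Fin.isValue, hb0, hb1, hb2, hb3, map_neg, hL.apply_self_left,
      hmix, ha, hd, zero_add, add_zero, neg_zero]
    ring
  have hρ (j k : Fin 4) : ∑ i, L (b i) (b j) (b k) (b i) =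
      (a + d) / 2 * ⟪b j, b k⟫ + (a - d) / 2 * ⟪b j, P (b k)⟫ := by
    fin_cases j <;> fin_cases k <;>
      simp only [Fin.sum_univ_four, Fin.isValue, Fin.mk_one, Fin.zero_eta, Fin.reduceFinMk,
        Fin.reduceEq, hb0, hb1, hb2, hb3, hL.apply_self_left, hL.apply_self_right, hmix, ha, hd,
        b.inner_eq_ite, ↓reduceIte, inner_neg_right, zero_add, add_zero, neg_zero, mul_zero,
        mul_neg, mul_one] <;>
      ring
  have hforms : ∑ i, (L (b i)).compr₂ (LinearMap.applyₗ (b i)) =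
      ((a + d) / 2) • innerₗ E + ((a - d) / 2) • (innerₗ E).compl₂ P :=
    LinearMap.ext_basis b.toBasis b.toBasis fun j k => by simpa using hρ j k
  have hyz := LinearMap.congr_fun₂ hforms y z
  simp only [LinearMap.coe_sum, Finset.sum_apply, LinearMap.compr₂_apply,
    LinearMap.applyₗ_apply_apply, LinearMap.add_apply, LinearMap.smul_apply, innerₗ_apply_apply,
    smul_eq_mul, LinearMap.compl₂_apply] at hyz
  rw [hyz, hτ, hτ']
  ring

/-- Let (V, P, g) be 4-dimensional with tr P = 0, and let L be a
Riemannian P-tensor on V. Then the almost Einstein condition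
ρ(L)(y,z) = (1/4){τ(L) g(y,z) + τ*(L) g(y,Pz)} holds for all y, z ∈ V. -/
theorem riemannian_P_tensor_almost_einstein_dim4
    (hdim : finrank ℝ V = 4)
    (P : V →ₗ[ℝ] V)
    (hP2 : ∀ x : V, P (P x) = x)
    (hPg : ∀ x y : V, ⟪P x, P y⟫ = ⟪x, y⟫)
    (htr : LinearMap.trace ℝ V P = 0)
    (L : V →ₗ[ℝ] V →ₗ[ℝ] V →ₗ[ℝ] V →ₗ[ℝ] ℝ)
    (hA1 : ∀ x y z w : V, L x y z w = - L y x z w)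
    (hA2 : ∀ x y z w : V, L x y z w = - L x y w z)
    (hBianchi : ∀ x y z w : V, L x y z w + L y z x w + L z x y w = 0)
    (hRP : ∀ x y z w : V, L x y (P z) (P w) = L x y z w) :
    ∀ y z : V,
      ricci L y z = (1 / 4 : ℝ) *
        (scalarCurv L * ⟪y, z⟫ + scalarCurvStar P L * ⟪y, P z⟫) := by
  obtain ⟨b, hb0, hb1, hb2, hb3⟩ := exists_orthonormalBasis_adapted hdim P hP2 hPg htr
  intro y z
  rw [ricci_eq_sum L b, scalarCurv_eq_sum L b, scalarCurvStar_eq_sum L b]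
  exact almost_einstein_of_adapted_basis ⟨hA1, hA2, hBianchi⟩ hRP b hb0 hb1 hb2 hb3 y z
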